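/- Suppose μ_i are Radon measures on an open U ⊆ ℝⁿ converging strongly to μ, all of the form μ_i = Hᵐ ⌊ θ_i for nonnegative Borel functions θ_i (m-rectifiable weights). Then for every open G with compact closure in U, ∫_G |θ(x) − θ_i(x)| dHᵐ(x) = sup{ μ(g) − μ_i(g) : g ∈ 𝒦(U), supp g ⊆ G, |g| ≤ 1 } → 0 as i → ∞, where μ = Hᵐ ⌊ θ; consequently θ_i → θ in L¹_loc(Hᵐ) and a subsequence of θ_i(x) converges to θ(x) for Hᵐ-a.e. x. In particular, if each θ_i is integer-valued Hᵐ-a.e., so is θ. -/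

import Mathlib

open MeasureTheory Filter Metric Set Topology
open scoped ENNReal

/-!
For a signed density `F` on an open set `G`, `∫_G |F|` is the supremum of `∫_G g F` over
continuous `g` with `tsupport g ⊆ G` and `|g| ≤ 1`: by inner regularity of `|F| ν⌊G`, most of
the mass of `{F ≥ 0}` and `{F < 0}` sits on disjoint compacts, and Urysohn gives `g = ±1` there.
Applied to `F = θ₀ - θ i`, the `L¹` distance on `G` is bounded by the total variation of
`μ - μ i` on the compact set `closure G`, which tends to `0`. Exhausting `U` by countably many
compacts, a subsequence whose `L¹` errors are summable on each of them converges a.e., and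
integrality survives a.e. limits because `ℕ` is closed in `ℝ`.
-/

section Measure

variable {X : Type*} [MeasurableSpace X] {μ : Measure X}

theorem abs_setIntegral_mul_le {g f : X → ℝ} {S : Set X} (hg : ∀ x, |g x| ≤ 1)
    (hf : IntegrableOn f S μ) : |∫ x in S, g x * f x ∂μ| ≤ ∫ x in S, |f x| ∂μ :=
  norm_integral_le_of_norm_le (f := fun x => g x * f x) hf.abs <| ae_of_all _ fun x => by
    simpa [abs_mul] using mul_le_mul_of_nonneg_right (hg x) (abs_nonneg (f x))

theorem integrableOn_of_setLIntegral_ofReal_lt_top {f : X → ℝ} {S : Set X} (hf : Measurable f)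
    (h0 : ∀ x, 0 ≤ f x) (hfin : ∫⁻ x in S, ENNReal.ofReal (f x) ∂μ < ∞) : IntegrableOn f S μ :=
  ⟨hf.aestronglyMeasurable, (hasFiniteIntegral_iff_ofReal (ae_of_all _ h0)).2 hfin⟩

variable {E : Type*} [NormedAddCommGroup E]

theorem ae_tendsto_of_tsum_lintegral_enorm_sub_ne_top {f : ℕ → X → E} {g : X → E}
    (hf : ∀ k, AEStronglyMeasurable (f k) μ) (hg : AEStronglyMeasurable g μ)
    (h : ∑' k, ∫⁻ x, ‖g x - f k x‖ₑ ∂μ ≠ ∞) :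
    ∀ᵐ x ∂μ, Tendsto (fun k => f k x) atTop (𝓝 (g x)) := by
  have hmeas : ∀ k, AEMeasurable (fun x => ‖g x - f k x‖ₑ) μ := fun k => (hg.sub (hf k)).enorm
  rw [← lintegral_tsum hmeas] at h
  filter_upwards [ae_lt_top' (AEMeasurable.tsum hmeas) h] with x hx
  rw [tendsto_iff_edist_tendsto_0]
  simp_rw [edist_comm _ (g x), edist_eq_enorm_sub]
  exact ENNReal.tendsto_atTop_zero_of_tsum_ne_top hx.ne

theorem exists_strictMono_ae_tendsto_of_tendsto_lintegral {f : ℕ → X → E} {g : X → E}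
    (hf : ∀ k, AEStronglyMeasurable (f k) μ) (hg : AEStronglyMeasurable g μ) {s : ℕ → Set X}
    (h : ∀ j, Tendsto (fun i => ∫⁻ x in s j, ‖g x - f i x‖ₑ ∂μ) atTop (𝓝 0)) :
    ∃ φ : ℕ → ℕ, StrictMono φ ∧
      ∀ᵐ x ∂μ.restrict (⋃ j, s j), Tendsto (fun k => f (φ k) x) atTop (𝓝 (g x)) := by
  have hev : ∀ k, ∀ᶠ i in atTop,
      ∀ j ∈ Finset.range (k + 1), ∫⁻ x in s j, ‖g x - f i x‖ₑ ∂μ < 2⁻¹ ^ k := fun k =>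
    (eventually_all_finset _).2 fun j _ =>
      (h j).eventually (gt_mem_nhds (ENNReal.pow_pos (by norm_num) k))
  obtain ⟨φ, hφ, hφs⟩ := extraction_forall_of_eventually hev
  refine ⟨φ, hφ, (ae_restrict_iUnion_iff _ _).2 fun j => ?_⟩
  have hsum : ∑' k, ∫⁻ x in s j, ‖g x - f (φ (k + j)) x‖ₑ ∂μ ≠ ∞ := by
    refine ne_top_of_le_ne_top (b := ∑' k : ℕ, 2⁻¹ ^ k) ?_ (ENNReal.tsum_le_tsum fun k => ?_)
    · rw [ENNReal.tsum_geometric_two]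
      exact ENNReal.ofNat_ne_top
    · calc _ ≤ (2⁻¹ : ℝ≥0∞) ^ (k + j) :=
            (hφs (k + j) j (Finset.mem_range.2 (by omega))).le
        _ ≤ 2⁻¹ ^ k := pow_le_pow_of_le_one zero_le (by norm_num) (Nat.le_add_right k j)
  filter_upwards [ae_tendsto_of_tsum_lintegral_enorm_sub_ne_top (fun k => (hf _).restrict)
    hg.restrict hsum] with x hx
  exact (tendsto_add_atTop_iff_nat j).1 hx

theorem ae_mem_of_ae_tendsto {Y : Type*} [TopologicalSpace Y] {C : Set Y} (hC : IsClosed C)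
    {f : ℕ → X → Y} {g : X → Y} (hf : ∀ k, ∀ᵐ x ∂μ, f k x ∈ C)
    (hlim : ∀ᵐ x ∂μ, Tendsto (fun k => f k x) atTop (𝓝 (g x))) : ∀ᵐ x ∂μ, g x ∈ C := by
  filter_upwards [ae_all_iff.2 hf, hlim] with x hx hx_lim
  exact hC.mem_of_tendsto hx_lim (Eventually.of_forall hx)

theorem abs_sub_mul_le_two_mul_indicator {X : Type*} {F g : X → ℝ} {K₁ K₂ G : Set X}
    (hg : ∀ x, |g x| ≤ 1) (hg₁ : EqOn g 1 K₁) (hg₂ : EqOn g (-1) K₂)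
    (hK₁ : K₁ ⊆ {x | 0 ≤ F x}) (hK₂ : K₂ ⊆ {x | F x < 0}) {x : X} (hxG : x ∈ G) :
    |F x| - g x * F x ≤ 2 * (G \ (K₁ ∪ K₂)).indicator (fun x => |F x|) x := by
  by_cases hx₁ : x ∈ K₁
  · have : 0 ≤ F x := hK₁ hx₁
    simp [hg₁ hx₁, abs_of_nonneg this, indicator_nonneg]
  by_cases hx₂ : x ∈ K₂
  · have : F x < 0 := hK₂ hx₂
    simp [hg₂ hx₂, abs_of_neg this, indicator_nonneg]
  rw [indicator_of_mem (show x ∈ G \ (K₁ ∪ K₂) from ⟨hxG, by simp [hx₁, hx₂]⟩)]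
  have := abs_le.1 ((abs_mul (g x) (F x)).trans_le (mul_le_of_le_one_left (abs_nonneg _) (hg x)))
  linarith

end Measure

section Topology

variable {X : Type*} [TopologicalSpace X]

theorem IsOpen.isSigmaCompact [SecondCountableTopology X] [LocallyCompactSpace X] {U : Set X}
    (hU : IsOpen U) : IsSigmaCompact U := by
  rw [isSigmaCompact_iff_sigmaCompactSpace]
  have := hU.locallyCompactSpace
  infer_instance

abbrev SupportedUnitBall (K : Set X) : Type _ := {g : C(X, ℝ) // tsupport g ⊆ K ∧ ∀ x, |g x| ≤ 1}

instance (K : Set X) : Nonempty (SupportedUnitBall K) := ⟨⟨0, by simp, by simp⟩⟩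

theorem exists_supportedUnitBall_eqOn_one_eqOn_neg_one [T2Space X] [LocallyCompactSpace X]
    {K₁ K₂ G : Set X} (hK₁ : IsCompact K₁) (hK₂ : IsCompact K₂) (hd : Disjoint K₁ K₂)
    (hG : IsOpen G) (h₁ : K₁ ⊆ G) (h₂ : K₂ ⊆ G) :
    ∃ g : SupportedUnitBall G, EqOn g.1 1 K₁ ∧ EqOn g.1 (-1) K₂ := by
  obtain ⟨g₁, hg₁K₁, -, hg₁G, hg₁⟩ := exists_continuousMap_one_of_isCompact_subset_isOpen hK₁
    (hG.sdiff hK₂.isClosed) (subset_sdiff.2 ⟨h₁, hd⟩)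
  obtain ⟨g₂, hg₂K₂, -, hg₂G, hg₂⟩ := exists_continuousMap_one_of_isCompact_subset_isOpen hK₂
    (hG.sdiff hK₁.isClosed) (subset_sdiff.2 ⟨h₂, hd.symm⟩)
  have hg₁K₂ : EqOn g₁ 0 K₂ := fun x hx =>
    image_eq_zero_of_notMem_tsupport fun h => (hg₁G h).2 hx
  have hg₂K₁ : EqOn g₂ 0 K₁ := fun x hx =>
    image_eq_zero_of_notMem_tsupport fun h => (hg₂G h).2 hx
  have hsupp : tsupport (g₁ - g₂) ⊆ G := (tsupport_sub _ _).trans <|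
    union_subset (hg₁G.trans sdiff_subset) (hg₂G.trans sdiff_subset)
  refine ⟨⟨g₁ - g₂, hsupp, fun x => ?_⟩, fun x hx => ?_, fun x hx => ?_⟩
  · obtain ⟨h₁0, h₁1⟩ := hg₁ x
    obtain ⟨h₂0, h₂1⟩ := hg₂ x
    rw [ContinuousMap.sub_apply, abs_le]
    constructor <;> linarith
  · simp [hg₁K₁ hx, hg₂K₁ hx]
  · simp [hg₁K₂ hx, hg₂K₂ hx]

variable [MeasurableSpace X] {ν : Measure X}

theorem SupportedUnitBall.integrableOn_mul [OpensMeasurableSpace X] {K S : Set X}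
    (g : SupportedUnitBall K) {f : X → ℝ} (hf : IntegrableOn f S ν) :
    IntegrableOn (fun x => g.1 x * f x) S ν :=
  hf.bdd_mul g.1.continuous.aestronglyMeasurable (ae_of_all _ g.2.2)

theorem SupportedUnitBall.setIntegral_mul_eq {G U : Set X} (g : SupportedUnitBall G)
    (hU : MeasurableSet U) (hGU : G ⊆ U) (f : X → ℝ) :
    ∫ x in U, g.1 x * f x ∂ν = ∫ x in G, g.1 x * f x ∂ν :=
  setIntegral_eq_of_subset_of_forall_sdiff_eq_zero hU hGU fun x hx => by
    rw [image_eq_zero_of_notMem_tsupport fun h => hx.2 (g.2.1 h), zero_mul]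

theorem SupportedUnitBall.setIntegral_mul_sub_eq [OpensMeasurableSpace X] {G U : Set X}
    (g : SupportedUnitBall G) (hU : MeasurableSet U) (hGU : G ⊆ U) {f₁ f₂ : X → ℝ}
    (h₁ : IntegrableOn f₁ G ν) (h₂ : IntegrableOn f₂ G ν) :
    (∫ x in U, g.1 x * f₁ x ∂ν) - ∫ x in U, g.1 x * f₂ x ∂ν =
      ∫ x in G, g.1 x * (f₁ x - f₂ x) ∂ν := by
  rw [g.setIntegral_mul_eq hU hGU, g.setIntegral_mul_eq hU hGU,
    ← integral_sub (g.integrableOn_mul h₁) (g.integrableOn_mul h₂)]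
  simp_rw [mul_sub]

variable [T2Space X] [LocallyCompactSpace X] [SecondCountableTopology X] [BorelSpace X]

theorem exists_isCompact_lintegral_enorm_sdiff_lt {F : X → ℝ} (hF : Measurable F) {G : Set X}
    (hG : MeasurableSet G) (hfin : ∫⁻ x in G, ‖F x‖ₑ ∂ν ≠ ∞) {ε : ℝ≥0∞} (hε : ε ≠ 0) :
    ∃ K₁ ⊆ G ∩ {x | 0 ≤ F x}, ∃ K₂ ⊆ G ∩ {x | F x < 0}, IsCompact K₁ ∧ IsCompact K₂ ∧
      ∫⁻ x in G \ (K₁ ∪ K₂), ‖F x‖ₑ ∂ν < ε := by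
  set σ := (ν.restrict G).withDensity fun x => ‖F x‖ₑ
  have : IsFiniteMeasure σ := ⟨by
    rwa [withDensity_apply _ MeasurableSet.univ, Measure.restrict_univ, lt_top_iff_ne_top]⟩
  obtain ⟨K₁, hK₁P, hK₁, hσ₁⟩ := (hG.inter (measurableSet_le measurable_const hF))
    |>.exists_isCompact_sdiff_lt (measure_ne_top σ _) (ENNReal.half_pos hε).ne'
  obtain ⟨K₂, hK₂N, hK₂, hσ₂⟩ := (hG.inter (measurableSet_lt hF measurable_const))
    |>.exists_isCompact_sdiff_lt (measure_ne_top σ _) (ENNReal.half_pos hε).ne'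
  refine ⟨K₁, hK₁P, K₂, hK₂N, hK₁, hK₂, ?_⟩
  have hS : MeasurableSet (G \ (K₁ ∪ K₂)) :=
    hG.diff (hK₁.isClosed.measurableSet.union hK₂.isClosed.measurableSet)
  have hσS : σ (G \ (K₁ ∪ K₂)) = ∫⁻ x in G \ (K₁ ∪ K₂), ‖F x‖ₑ ∂ν := by
    rw [withDensity_apply _ hS, Measure.restrict_restrict hS, inter_eq_left.2 sdiff_subset]
  have hcover : G \ (K₁ ∪ K₂) ⊆ (G ∩ {x | 0 ≤ F x}) \ K₁ ∪ (G ∩ {x | F x < 0}) \ K₂ := by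
    rintro x ⟨hxG, hxK⟩
    rcases le_or_gt 0 (F x) with hx | hx
    · exact Or.inl ⟨⟨hxG, hx⟩, fun h => hxK (Or.inl h)⟩
    · exact Or.inr ⟨⟨hxG, hx⟩, fun h => hxK (Or.inr h)⟩
  calc ∫⁻ x in G \ (K₁ ∪ K₂), ‖F x‖ₑ ∂ν = σ (G \ (K₁ ∪ K₂)) := hσS.symm
    _ ≤ σ ((G ∩ {x | 0 ≤ F x}) \ K₁) + σ ((G ∩ {x | F x < 0}) \ K₂) :=
      (measure_mono hcover).trans (measure_union_le _ _)
    _ < ε / 2 + ε / 2 := ENNReal.add_lt_add hσ₁ hσ₂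
    _ = ε := ENNReal.add_halves ε

theorem setIntegral_abs_eq_iSup {F : X → ℝ} (hF : Measurable F) {G : Set X} (hG : IsOpen G)
    (hFi : IntegrableOn F G ν) :
    ∫ x in G, |F x| ∂ν = ⨆ g : SupportedUnitBall G, ∫ x in G, g.1 x * F x ∂ν := by
  have hle : ∀ g : SupportedUnitBall G, ∫ x in G, g.1 x * F x ∂ν ≤ ∫ x in G, |F x| ∂ν :=
    fun g => (le_abs_self _).trans (abs_setIntegral_mul_le g.2.2 hFi)
  refine le_antisymm (le_of_forall_pos_le_add fun ε hε => ?_) (ciSup_le hle)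
  obtain ⟨K₁, hK₁, K₂, hK₂, hK₁c, hK₂c, hsmall⟩ := exists_isCompact_lintegral_enorm_sdiff_lt hF
    hG.measurableSet hFi.2.ne (ENNReal.ofReal_pos.2 (half_pos hε)).ne'
  have hd : Disjoint K₁ K₂ := disjoint_left.2 fun x hx₁ hx₂ =>
    (show F x < 0 from (hK₂ hx₂).2).not_ge (hK₁ hx₁).2
  obtain ⟨g, hg₁, hg₂⟩ := exists_supportedUnitBall_eqOn_one_eqOn_neg_one hK₁c hK₂c hd hG
    (hK₁.trans inter_subset_left) (hK₂.trans inter_subset_left)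
  set S := G \ (K₁ ∪ K₂)
  have hSm : MeasurableSet S :=
    hG.measurableSet.diff (hK₁c.isClosed.measurableSet.union hK₂c.isClosed.measurableSet)
  have hS : ∫ x in S, |F x| ∂ν < ε / 2 := by
    have h := integral_norm_eq_lintegral_enorm (μ := ν.restrict S) hF.aestronglyMeasurable
    simp only [Real.norm_eq_abs] at h
    rw [h]
    exact ENNReal.toReal_lt_of_lt_ofReal hsmall
  have hpt : ∀ x ∈ G, |F x| - g.1 x * F x ≤ 2 * S.indicator (fun x => |F x|) x :=
    fun x => abs_sub_mul_le_two_mul_indicator g.2.2 hg₁ hg₂ (hK₁.trans inter_subset_right)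
      (hK₂.trans inter_subset_right)
  have hgap : ∫ x in G, |F x| ∂ν - ∫ x in G, g.1 x * F x ∂ν ≤ ε := by
    rw [← integral_sub hFi.abs (g.integrableOn_mul hFi)]
    calc ∫ x in G, |F x| - g.1 x * F x ∂ν ≤ ∫ x in G, 2 * S.indicator (fun x => |F x|) x ∂ν :=
          setIntegral_mono_on (hFi.abs.sub (g.integrableOn_mul hFi))
            ((hFi.abs.indicator hSm).const_mul 2) hG.measurableSet hpt
      _ = 2 * ∫ x in S, |F x| ∂ν := by
          rw [integral_const_mul, integral_indicator hSm, Measure.restrict_restrict hSm,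
            inter_eq_left.2 sdiff_subset]
      _ ≤ ε := by linarith
  linarith [le_ciSup ⟨_, forall_mem_range.2 hle⟩ g]

theorem setIntegral_abs_sub_eq_iSup {f₁ f₂ : X → ℝ} (hf₁ : Measurable f₁) (hf₂ : Measurable f₂)
    {G U : Set X} (hG : IsOpen G) (hU : MeasurableSet U) (hGU : G ⊆ U)
    (h₁ : IntegrableOn f₁ G ν) (h₂ : IntegrableOn f₂ G ν) :
    ∫ x in G, |f₁ x - f₂ x| ∂ν = ⨆ g : SupportedUnitBall G,
      ((∫ x in U, g.1 x * f₁ x ∂ν) - ∫ x in U, g.1 x * f₂ x ∂ν) := by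
  rw [setIntegral_abs_eq_iSup (F := fun x => f₁ x - f₂ x) (hf₁.sub hf₂) hG (h₁.sub h₂)]
  exact iSup_congr fun g => (g.setIntegral_mul_sub_eq hU hGU h₁ h₂).symm

theorem setIntegral_abs_sub_le_iSup_abs {f₁ f₂ : X → ℝ} (hf₁ : Measurable f₁)
    (hf₂ : Measurable f₂) {G K U : Set X} (hG : IsOpen G) (hU : MeasurableSet U) (hGK : G ⊆ K)
    (hKU : K ⊆ U) (h₁ : IntegrableOn f₁ K ν) (h₂ : IntegrableOn f₂ K ν) :
    ∫ x in G, |f₁ x - f₂ x| ∂ν ≤ ⨆ g : SupportedUnitBall K,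
      |(∫ x in U, g.1 x * f₁ x ∂ν) - ∫ x in U, g.1 x * f₂ x ∂ν| := by
  have hbdd : BddAbove (range fun g : SupportedUnitBall K =>
      |(∫ x in U, g.1 x * f₁ x ∂ν) - ∫ x in U, g.1 x * f₂ x ∂ν|) := by
    refine ⟨∫ x in K, |f₁ x - f₂ x| ∂ν, forall_mem_range.2 fun g => ?_⟩
    rw [g.setIntegral_mul_sub_eq hU hKU h₁ h₂]
    exact abs_setIntegral_mul_le g.2.2 (h₁.sub h₂)
  rw [setIntegral_abs_sub_eq_iSup hf₁ hf₂ hG hU (hGK.trans hKU) (h₁.mono_set hGK)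
    (h₂.mono_set hGK)]
  exact ciSup_le fun g => (le_abs_self _).trans (le_ciSup hbdd ⟨g.1, g.2.1.trans hGK, g.2.2⟩)

variable {U : Set X} {θ : ℕ → X → ℝ} {θ₀ : X → ℝ}

theorem tendsto_setIntegral_abs_sub_of_isOpen (hU : MeasurableSet U)
    (hθ : ∀ i, Measurable (θ i)) (hθ₀ : Measurable θ₀)
    (hint : ∀ K ⊆ U, IsCompact K → IntegrableOn θ₀ K ν ∧ ∀ i, IntegrableOn (θ i) K ν)
    (hconv : ∀ K ⊆ U, IsCompact K → Tendsto (fun i => ⨆ g : SupportedUnitBall K,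
      |(∫ x in U, g.1 x * θ₀ x ∂ν) - ∫ x in U, g.1 x * θ i x ∂ν|) atTop (𝓝 0))
    {G : Set X} (hG : IsOpen G) (hGc : IsCompact (closure G)) (hGU : closure G ⊆ U) :
    Tendsto (fun i => ∫ x in G, |θ₀ x - θ i x| ∂ν) atTop (𝓝 0) :=
  squeeze_zero (fun _ => setIntegral_nonneg hG.measurableSet fun _ _ => abs_nonneg _)
    (fun i => setIntegral_abs_sub_le_iSup_abs hθ₀ (hθ i) hG hU subset_closure hGU
      (hint _ hGU hGc).1 ((hint _ hGU hGc).2 i))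
    (hconv _ hGU hGc)

theorem tendsto_lintegral_enorm_sub_of_isCompact (hU : IsOpen U)
    (hθ : ∀ i, Measurable (θ i)) (hθ₀ : Measurable θ₀)
    (hint : ∀ K ⊆ U, IsCompact K → IntegrableOn θ₀ K ν ∧ ∀ i, IntegrableOn (θ i) K ν)
    (hconv : ∀ K ⊆ U, IsCompact K → Tendsto (fun i => ⨆ g : SupportedUnitBall K,
      |(∫ x in U, g.1 x * θ₀ x ∂ν) - ∫ x in U, g.1 x * θ i x ∂ν|) atTop (𝓝 0))
    {K : Set X} (hK : IsCompact K) (hKU : K ⊆ U) :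
    Tendsto (fun i => ∫⁻ x in K, ‖θ₀ x - θ i x‖ₑ ∂ν) atTop (𝓝 0) := by
  obtain ⟨G, hG, hKG, hGU, hGc⟩ := exists_open_between_and_isCompact_closure hK hU hKU
  have hlim := ENNReal.tendsto_ofReal
    (tendsto_setIntegral_abs_sub_of_isOpen hU.measurableSet hθ hθ₀ hint hconv hG hGc hGU)
  rw [ENNReal.ofReal_zero] at hlim
  refine tendsto_of_tendsto_of_tendsto_of_le_of_le tendsto_const_nhds hlim (fun _ => zero_le)
    fun i => ?_
  have hGi : IntegrableOn (fun x => θ₀ x - θ i x) G ν :=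
    (((hint _ hGU hGc).1.sub ((hint _ hGU hGc).2 i)).mono_set subset_closure)
  calc ∫⁻ x in K, ‖θ₀ x - θ i x‖ₑ ∂ν ≤ ∫⁻ x in G, ‖θ₀ x - θ i x‖ₑ ∂ν := lintegral_mono_set hKG
    _ = ENNReal.ofReal (∫ x in G, |θ₀ x - θ i x| ∂ν) :=
      (ofReal_integral_norm_eq_lintegral_enorm hGi).symm

end Topology

/-- If `μ i = Hᵐ ⌊ θ i` converge strongly on compacts of `U` to `μ = Hᵐ ⌊ θ₀`, then on
every open `G` with compact closure in `U` the `L¹` distance `∫_G |θ₀ − θ i| dHᵐ`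
equals the dual supremum and tends to `0`; a subsequence of `θ i` converges to `θ₀`
`Hᵐ`-a.e. on `U`; and if each `θ i` is integer valued `Hᵐ`-a.e. on `U`, so is `θ₀`. -/
theorem strong_limit_of_rectifiable_weights {n : ℕ} (m : ℕ)
    (U : Set (EuclideanSpace ℝ (Fin n))) (hU : IsOpen U)
    (θ : ℕ → EuclideanSpace ℝ (Fin n) → ℝ) (θ₀ : EuclideanSpace ℝ (Fin n) → ℝ)
    (hθ : ∀ i, Measurable (θ i)) (hθ₀ : Measurable θ₀)
    (hpos : ∀ i x, 0 ≤ θ i x) (hpos₀ : ∀ x, 0 ≤ θ₀ x)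
    (hloc : ∀ K, K ⊆ U → IsCompact K →
      (∫⁻ x in K, ENNReal.ofReal (θ₀ x) ∂(μH[(m : ℝ)] : Measure (EuclideanSpace ℝ (Fin n)))) < ∞ ∧
      ∀ i, (∫⁻ x in K, ENNReal.ofReal (θ i x) ∂(μH[(m : ℝ)] : Measure (EuclideanSpace ℝ (Fin n)))) < ∞)
    (hconv : ∀ K, K ⊆ U → IsCompact K → Tendsto (fun i =>
      ⨆ g : {g : C(EuclideanSpace ℝ (Fin n), ℝ) // tsupport g ⊆ K ∧ ∀ x, |g x| ≤ 1},
        |(∫ x in U, g.1 x * θ₀ x ∂(μH[(m : ℝ)] : Measure (EuclideanSpace ℝ (Fin n)))) -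
          ∫ x in U, g.1 x * θ i x ∂(μH[(m : ℝ)] : Measure (EuclideanSpace ℝ (Fin n)))|)
      atTop (𝓝 0)) :
    (∀ G, G ⊆ U → IsOpen G → IsCompact (closure G) → closure G ⊆ U →
      (∀ i, (∫ x in G, |θ₀ x - θ i x| ∂(μH[(m : ℝ)] : Measure (EuclideanSpace ℝ (Fin n)))) =
        ⨆ g : {g : C(EuclideanSpace ℝ (Fin n), ℝ) // tsupport g ⊆ G ∧ ∀ x, |g x| ≤ 1},
          ((∫ x in U, g.1 x * θ₀ x ∂(μH[(m : ℝ)] : Measure (EuclideanSpace ℝ (Fin n)))) -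
            ∫ x in U, g.1 x * θ i x ∂(μH[(m : ℝ)] : Measure (EuclideanSpace ℝ (Fin n))))) ∧
      Tendsto (fun i =>
          ∫ x in G, |θ₀ x - θ i x| ∂(μH[(m : ℝ)] : Measure (EuclideanSpace ℝ (Fin n))))
        atTop (𝓝 0)) ∧
    (∃ φ : ℕ → ℕ, StrictMono φ ∧
      ∀ᵐ x ∂((μH[(m : ℝ)] : Measure (EuclideanSpace ℝ (Fin n))).restrict U),
        Tendsto (fun k => θ (φ k) x) atTop (𝓝 (θ₀ x))) ∧
    ((∀ i, ∀ᵐ x ∂((μH[(m : ℝ)] : Measure (EuclideanSpace ℝ (Fin n))).restrict U),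
        ∃ k : ℕ, θ i x = k) →
      ∀ᵐ x ∂((μH[(m : ℝ)] : Measure (EuclideanSpace ℝ (Fin n))).restrict U),
        ∃ k : ℕ, θ₀ x = k) := by
  have hint : ∀ K ⊆ U, IsCompact K → IntegrableOn θ₀ K μH[(m : ℝ)] ∧
      ∀ i, IntegrableOn (θ i) K μH[(m : ℝ)] := fun K hKU hK =>
    ⟨integrableOn_of_setLIntegral_ofReal_lt_top hθ₀ hpos₀ (hloc K hKU hK).1,
      fun i => integrableOn_of_setLIntegral_ofReal_lt_top (hθ i) (hpos i) ((hloc K hKU hK).2 i)⟩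
  obtain ⟨K, hK, hUK⟩ := hU.isSigmaCompact
  obtain ⟨φ, hφ, hae⟩ := exists_strictMono_ae_tendsto_of_tendsto_lintegral
    (fun i => (hθ i).aestronglyMeasurable) hθ₀.aestronglyMeasurable fun j =>
      tendsto_lintegral_enorm_sub_of_isCompact hU hθ hθ₀ hint hconv (hK j)
        (hUK ▸ subset_iUnion K j)
  rw [hUK] at hae
  have hnat : IsClosed {y : ℝ | ∃ k : ℕ, y = k} := by
    convert Nat.isClosedEmbedding_coe_real.isClosed_range using 1
    ext y
    exact exists_congr fun k => eq_comm
  refine ⟨fun G hGU hG hGc hGcl => ⟨fun i => ?_,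
      tendsto_setIntegral_abs_sub_of_isOpen hU.measurableSet hθ hθ₀ hint hconv hG hGc hGcl⟩,
    ⟨φ, hφ, hae⟩, fun hθnat => ae_mem_of_ae_tendsto hnat (fun k => hθnat (φ k)) hae⟩
  exact setIntegral_abs_sub_eq_iSup hθ₀ (hθ i) hG hU.measurableSet hGU
    ((hint _ hGcl hGc).1.mono_set subset_closure) (((hint _ hGcl hGc).2 i).mono_set subset_closure)
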